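/- arXiv:2109.01345 — 2 statements merged into one kernel-verified Lean document; each statement's English description precedes it below -/
import Mathlib

section
/- Let ρ be a d×d density matrix and let Φ₁,…,Φ_N (N ≥ 2) be quantum channels on d×d matrices, where Φ_s has Kraus operators K₁ˢ,…,K_nˢ. Then for any permutations π₁,…,π_N of {1,…,n}, ∑_{s=1}^{N} I_ρ(Φ_s) ≥ (1/(2N−2)) { ∑_{1≤s<t≤N} ∑_{i=1}^{n} I_ρ(K^s_{π_s(i)} + K^t_{π_t(i)}) + (2/(N(N−1))) [ ∑_{1≤s<t≤N} √( ∑_{i=1}^{n} I_ρ(K^s_{π_s(i)} − K^t_{π_t(i)}) ) ]² }. -/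
/-!
Only two properties of `I_ρ` matter: it is nonnegative and, being `½ ‖[√ρ, ·]‖²` for the
Frobenius norm, it satisfies the parallelogram law `I(A + B) + I(A - B) = 2 I(A) + 2 I(B)`.
Summing that law over the paired Kraus operators of each of the `N(N-1)/2` pairs of channels
(the permutations only reorder a channel's own sum) gives `P + D = 2(N-1) ∑ₛ I_ρ(Φₛ)`, where `P`
and `D` collect the sum and difference terms, and Cauchy–Schwarz over the pairs gives
`(∑_{s<t} √D_st)² ≤ N(N-1)/2 · D`.
-/

open Matrix Finset
open scoped ComplexOrder

/-- The positive semidefinite square root, as `Matrix.PosSemidef.sqrt` was defined in older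
Mathlib (removed since). -/
noncomputable def Matrix.PosSemidef.sqrt {n 𝕜 : Type*} [Fintype n] [DecidableEq n] [RCLike 𝕜]
    {A : Matrix n n 𝕜} (hA : A.PosSemidef) : Matrix n n 𝕜 :=
  hA.1.eigenvectorUnitary.1 * diagonal ((↑) ∘ (√·) ∘ hA.1.eigenvalues) *
    (star hA.1.eigenvectorUnitary : Matrix n n 𝕜)

/-- Wigner–Yanase skew information `I_ρ(A) = (1/2) Tr([√ρ, A]† [√ρ, A])` of a matrix `A`
with respect to a positive semidefinite matrix `ρ`, where `√ρ = hρ.sqrt` is the positive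
semidefinite square root of `ρ`. -/
noncomputable def skewInfo {d : ℕ} {ρ : Matrix (Fin d) (Fin d) ℂ} (hρ : ρ.PosSemidef)
    (A : Matrix (Fin d) (Fin d) ℂ) : ℝ :=
  (1 / 2 : ℝ) *
    (((hρ.sqrt * A - A * hρ.sqrt)ᴴ * (hρ.sqrt * A - A * hρ.sqrt)).trace).re

namespace Fin

theorem sum_sum_Ioi_add {R : Type*} [CommRing R] {N : ℕ} (f : Fin N → R) :
    ∑ s : Fin N, ∑ t ∈ Ioi s, (f s + f t) = ((N : R) - 1) * ∑ s, f s := by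
  have hswap : ∑ s : Fin N, ∑ t ∈ Ioi s, f t = ∑ t : Fin N, ∑ s ∈ Iio t, f t :=
    sum_comm' fun s t => by simp only [mem_Ioi, mem_Iio, mem_univ, and_true, true_and]
  have hcard (s : Fin N) : (#(Ioi s) : R) + #(Iio s) = N - 1 := by
    rw [eq_sub_iff_add_eq, card_Ioi, card_Iio]
    norm_cast
    congr 1
    omega
  rw [sum_congr rfl fun s _ => sum_add_distrib, sum_add_distrib, hswap, ← sum_add_distrib,
    mul_sum]
  refine sum_congr rfl fun s _ => ?_
  rw [Finset.sum_const, Finset.sum_const, nsmul_eq_mul, nsmul_eq_mul, ← add_mul, hcard]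

theorem sum_card_Ioi_mul_two (N : ℕ) : (∑ s : Fin N, #(Ioi s)) * 2 = N * (N - 1) := by
  rw [← sum_range_id_mul_two, ← sum_range_reflect, ← Fin.sum_univ_eq_sum_range]
  simp only [card_Ioi]

theorem sq_sum_sum_Ioi_le {N : ℕ} (g : Fin N → Fin N → ℝ) :
    (∑ s : Fin N, ∑ t ∈ Ioi s, g s t) ^ 2 ≤
      (N * (N - 1) / 2 : ℝ) * ∑ s : Fin N, ∑ t ∈ Ioi s, g s t ^ 2 := by
  have hpairs : ((#(univ.sigma fun s : Fin N => Ioi s) : ℕ) : ℝ) = N * (N - 1) / 2 := by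
    rw [card_sigma, eq_div_iff two_ne_zero, ← Nat.cast_ofNat, ← Nat.cast_mul,
      sum_card_Ioi_mul_two]
    rcases N with _ | N <;> simp
  rw [← hpairs, sum_sigma', sum_sigma']
  exact sq_sum_le_card_mul_sum_sq

end Fin

section Parallelogram

variable {M ι : Type*} [AddCommGroup M] [Fintype ι] {Q : M → ℝ}

theorem sum_add_add_sum_sub_of_parallelogram
    (hQ : ∀ a b, Q (a + b) + Q (a - b) = 2 * Q a + 2 * Q b) (A B : ι → M)
    (σ τ : Equiv.Perm ι) :
    ∑ i, Q (A (σ i) + B (τ i)) + ∑ i, Q (A (σ i) - B (τ i)) =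
      2 * ∑ i, Q (A i) + 2 * ∑ i, Q (B i) := by
  rw [← sum_add_distrib, mul_sum, mul_sum, ← Equiv.sum_comp σ (fun i => 2 * Q (A i)),
    ← Equiv.sum_comp τ (fun i => 2 * Q (B i)), ← sum_add_distrib]
  exact sum_congr rfl fun i _ => hQ _ _

theorem sum_ge_of_parallelogram {N : ℕ} (hN : 2 ≤ N)
    (hQ : ∀ a b, Q (a + b) + Q (a - b) = 2 * Q a + 2 * Q b) (hQ0 : ∀ a, 0 ≤ Q a)
    (K : Fin N → ι → M) (π : Fin N → Equiv.Perm ι) :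
    ∑ s, ∑ i, Q (K s i) ≥
      (1 / (2 * (N : ℝ) - 2)) *
        ((∑ s : Fin N, ∑ t ∈ Ioi s, ∑ i, Q (K s (π s i) + K t (π t i)))
          + (2 / ((N : ℝ) * ((N : ℝ) - 1))) *
            (∑ s : Fin N, ∑ t ∈ Ioi s, √(∑ i, Q (K s (π s i) - K t (π t i)))) ^ 2) := by
  set D : Fin N → Fin N → ℝ := fun s t => ∑ i, Q (K s (π s i) - K t (π t i))
  have hsum : ∑ s : Fin N, ∑ t ∈ Ioi s, ∑ i, Q (K s (π s i) + K t (π t i)) +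
      ∑ s : Fin N, ∑ t ∈ Ioi s, D s t = (2 * (N : ℝ) - 2) * ∑ s, ∑ i, Q (K s i) := by
    simp only [D, ← sum_add_distrib, sum_add_add_sum_sub_of_parallelogram hQ]
    rw [Fin.sum_sum_Ioi_add (fun s => 2 * ∑ i, Q (K s i)), ← mul_sum]
    ring
  have hN' : (2 : ℝ) ≤ N := by exact_mod_cast hN
  have hCS : 2 / ((N : ℝ) * (N - 1)) * (∑ s : Fin N, ∑ t ∈ Ioi s, √(D s t)) ^ 2 ≤
      ∑ s : Fin N, ∑ t ∈ Ioi s, D s t := by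
    have hsq (s t : Fin N) : √(D s t) ^ 2 = D s t := Real.sq_sqrt (sum_nonneg fun i _ => hQ0 _)
    have := Fin.sq_sum_sum_Ioi_le fun s t => √(D s t)
    simp only [hsq] at this
    rw [div_mul_eq_mul_div, div_le_iff₀ (by nlinarith)]
    linarith
  have hden : (0 : ℝ) < 2 * N - 2 := by linarith
  calc 1 / (2 * (N : ℝ) - 2) * (_ + 2 / ((N : ℝ) * (N - 1)) * _)
      ≤ 1 / (2 * (N : ℝ) - 2) * (∑ s : Fin N, ∑ t ∈ Ioi s, ∑ i, Q (K s (π s i) + K t (π t i)) +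
          ∑ s : Fin N, ∑ t ∈ Ioi s, D s t) :=
        mul_le_mul_of_nonneg_left (by linarith) (one_div_nonneg.mpr hden.le)
    _ = ∑ s, ∑ i, Q (K s i) := by rw [hsum, ← mul_assoc, one_div_mul_cancel hden.ne', one_mul]

end Parallelogram

theorem Matrix.trace_conjTranspose_mul_self_add_add_sub {m n R : Type*} [Fintype m] [Fintype n]
    [Ring R] [StarRing R] (C D : Matrix m n R) :
    ((C + D)ᴴ * (C + D)).trace + ((C - D)ᴴ * (C - D)).trace =
      2 * (Cᴴ * C).trace + 2 * (Dᴴ * D).trace := by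
  simp only [conjTranspose_add, conjTranspose_sub, Matrix.add_mul, Matrix.mul_add,
    Matrix.sub_mul, Matrix.mul_sub, trace_add, trace_sub]
  noncomm_ring

section SkewInformation

variable {d : ℕ} {ρ : Matrix (Fin d) (Fin d) ℂ} (hρ : ρ.PosSemidef)

theorem skewInfo_nonneg (A : Matrix (Fin d) (Fin d) ℂ) : 0 ≤ skewInfo hρ A :=
  mul_nonneg (by norm_num) (Complex.nonneg_iff.mp
    (posSemidef_conjTranspose_mul_self _).trace_nonneg).1

theorem skewInfo_add_add_skewInfo_sub (A B : Matrix (Fin d) (Fin d) ℂ) :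
    skewInfo hρ (A + B) + skewInfo hρ (A - B) = 2 * skewInfo hρ A + 2 * skewInfo hρ B := by
  have hadd : hρ.sqrt * (A + B) - (A + B) * hρ.sqrt =
      (hρ.sqrt * A - A * hρ.sqrt) + (hρ.sqrt * B - B * hρ.sqrt) := by noncomm_ring
  have hsub : hρ.sqrt * (A - B) - (A - B) * hρ.sqrt =
      (hρ.sqrt * A - A * hρ.sqrt) - (hρ.sqrt * B - B * hρ.sqrt) := by noncomm_ring
  have := congrArg Complex.re (trace_conjTranspose_mul_self_add_add_sub
    (hρ.sqrt * A - A * hρ.sqrt) (hρ.sqrt * B - B * hρ.sqrt))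
  simp only [Complex.add_re, Complex.mul_re, Complex.re_ofNat, Complex.im_ofNat, zero_mul,
    sub_zero] at this
  simp only [skewInfo, hadd, hsub]
  linarith

end SkewInformation

theorem stmt_3_general {d n N : ℕ} (hN : 2 ≤ N)
    (ρ : Matrix (Fin d) (Fin d) ℂ) (hρ : ρ.PosSemidef)
    (K : Fin N → Fin n → Matrix (Fin d) (Fin d) ℂ)
    (π : Fin N → Equiv.Perm (Fin n)) :
    ∑ s, ∑ i, skewInfo hρ (K s i) ≥
      (1 / (2 * (N : ℝ) - 2)) *
        ((∑ s : Fin N, ∑ t ∈ Finset.Ioi s, ∑ i, skewInfo hρ (K s (π s i) + K t (π t i)))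
          + (2 / ((N : ℝ) * ((N : ℝ) - 1))) *
            (∑ s : Fin N, ∑ t ∈ Finset.Ioi s,
              Real.sqrt (∑ i, skewInfo hρ (K s (π s i) - K t (π t i)))) ^ 2) :=
  sum_ge_of_parallelogram hN (skewInfo_add_add_skewInfo_sub hρ) (skewInfo_nonneg hρ) K π

theorem stmt_3 {d n N : ℕ} (hN : 2 ≤ N)
    (ρ : Matrix (Fin d) (Fin d) ℂ) (hρ : ρ.PosSemidef) (htr : ρ.trace = 1)
    (K : Fin N → Fin n → Matrix (Fin d) (Fin d) ℂ)
    (hK : ∀ s, ∑ i, (K s i)ᴴ * K s i = 1)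
    (π : Fin N → Equiv.Perm (Fin n)) :
    ∑ s, ∑ i, skewInfo hρ (K s i) ≥
      (1 / (2 * (N : ℝ) - 2)) *
        ((∑ s : Fin N, ∑ t ∈ Finset.Ioi s, ∑ i, skewInfo hρ (K s (π s i) + K t (π t i)))
          + (2 / ((N : ℝ) * ((N : ℝ) - 1))) *
            (∑ s : Fin N, ∑ t ∈ Finset.Ioi s,
              Real.sqrt (∑ i, skewInfo hρ (K s (π s i) - K t (π t i)))) ^ 2) :=
  stmt_3_general hN ρ hρ K π
end

section
/- Let ρ be a d×d density matrix and let U₁,…,U_N (N ≥ 2) be d×d unitary matrices. Then ∑_{s=1}^{N} I_ρ(U_s) ≥ (1/N) { I_ρ( ∑_{s=1}^{N} U_s ) + (2/(N(N−1))) [ ∑_{1≤s<t≤N} √( I_ρ(U_s − U_t) ) ]² }. -/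
open Matrix Finset
open scoped ComplexOrder

/-! In the Hilbert–Schmidt norm `I_ρ(A) = ‖[√ρ, A] / √2‖²`, the squared norm of a vector that
depends linearly on `A`. With `v_s = [√ρ, U_s] / √2` the inequality becomes one about `N` vectors
of a real inner product space, and follows from the Lagrange identity
`∑_{s<t} ‖v_s - v_t‖² = N ∑_s ‖v_s‖² - ‖∑_s v_s‖²` together with Cauchy–Schwarz over the
`N(N-1)/2` pairs, `(∑_{s<t} ‖v_s - v_t‖)² ≤ N(N-1)/2 · ∑_{s<t} ‖v_s - v_t‖²`. -/

namespace Finset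

variable {ι M : Type*} [Fintype ι] [LinearOrder ι] [LocallyFiniteOrderTop ι]
  [LocallyFiniteOrderBot ι]

lemma sum_sum_Ioi_add_swap [AddCommGroup M] (f : ι → ι → M) :
    ∑ i, ∑ j ∈ Ioi i, (f j i + f i j) = ∑ i, ∑ j, f j i - ∑ i, f i i := by
  classical
  rw [sum_sum_Ioi_add_eq_sum_sum_off_diag, ← sum_sub_distrib]
  refine sum_congr rfl fun i _ => ?_
  rw [← sum_compl_add_sum {i}, sum_singleton, add_sub_cancel_right]

lemma two_mul_card_sigma_Ioi :
    2 * (#(univ.sigma fun i : ι => Ioi i) : ℝ) = Fintype.card ι * (Fintype.card ι - 1) := by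
  have h := sum_sum_Ioi_add_swap fun _ _ : ι => (1 : ℝ)
  simp only [sum_const, card_univ, nsmul_eq_mul, mul_one, one_add_one_eq_two,
    mul_comm _ (2 : ℝ)] at h
  rw [card_sigma, Nat.cast_sum, mul_sum, h]
  ring

lemma sq_sum_sum_Ioi_le (a : ι → ι → ℝ) :
    2 * (∑ i, ∑ j ∈ Ioi i, a i j) ^ 2
      ≤ Fintype.card ι * (Fintype.card ι - 1) * ∑ i, ∑ j ∈ Ioi i, a i j ^ 2 := by
  have h := sq_sum_le_card_mul_sum_sq (s := univ.sigma fun i : ι => Ioi i)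
    (f := fun p => a p.1 p.2)
  rw [sum_sigma, sum_sigma] at h
  rw [← two_mul_card_sigma_Ioi, mul_assoc]
  exact mul_le_mul_of_nonneg_left h two_pos.le

end Finset

section InnerProductSpace

open scoped RealInnerProductSpace

variable {ι E : Type*} [Fintype ι] [LinearOrder ι] [LocallyFiniteOrderTop ι]
  [LocallyFiniteOrderBot ι] [NormedAddCommGroup E] [InnerProductSpace ℝ E]

lemma sum_sum_Ioi_norm_sub_sq (v : ι → E) :
    ∑ i, ∑ j ∈ Ioi i, ‖v i - v j‖ ^ 2
      = Fintype.card ι * ∑ i, ‖v i‖ ^ 2 - ‖∑ i, v i‖ ^ 2 := by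
  set f : ι → ι → ℝ := fun j i => ‖v j‖ ^ 2 - ⟪v j, v i⟫
  have hsplit : ∀ i j, ‖v i - v j‖ ^ 2 = f j i + f i j := by
    intro i j
    simp only [f]
    rw [norm_sub_sq_real, real_inner_comm]
    ring
  have hdiag : ∀ i, f i i = 0 := fun i => by simp [f]
  simp_rw [hsplit, sum_sum_Ioi_add_swap, hdiag, sum_const_zero, sub_zero, f, sum_sub_distrib,
    sum_const, card_univ, nsmul_eq_mul, ← real_inner_self_eq_norm_sq (∑ i, v i), sum_inner,
    inner_sum]
  rw [sum_comm]

theorem inv_card_mul_norm_sum_sq_add_le (v : ι → E) :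
    1 / (Fintype.card ι : ℝ) * (‖∑ i, v i‖ ^ 2
      + 2 / (Fintype.card ι * (Fintype.card ι - 1)) * (∑ i, ∑ j ∈ Ioi i, ‖v i - v j‖) ^ 2)
      ≤ ∑ i, ‖v i‖ ^ 2 := by
  have hc : (0 : ℝ) ≤ Fintype.card ι * (Fintype.card ι - 1) := by
    rw [← two_mul_card_sigma_Ioi]
    positivity
  have hpairs : 2 / (Fintype.card ι * (Fintype.card ι - 1)) * (∑ i, ∑ j ∈ Ioi i, ‖v i - v j‖) ^ 2
      ≤ ∑ i, ∑ j ∈ Ioi i, ‖v i - v j‖ ^ 2 := by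
    rcases hc.eq_or_lt with hc | hc
    · rw [← hc, div_zero, zero_mul]
      positivity
    · rw [div_mul_eq_mul_div, div_le_iff₀ hc, mul_comm _ (_ * _)]
      exact sq_sum_sum_Ioi_le _
  rw [one_div]
  refine inv_mul_le_of_le_mul₀ (Nat.cast_nonneg _) (by positivity) ?_
  linarith [sum_sum_Ioi_norm_sub_sq v]

end InnerProductSpace

namespace Matrix

variable {m n 𝕜 : Type*} [RCLike 𝕜]

def toEuclideanSpace : Matrix m n 𝕜 →ₗ[𝕜] EuclideanSpace 𝕜 (m × n) where
  toFun A := WithLp.toLp 2 fun p => A p.1 p.2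
  map_add' _ _ := rfl
  map_smul' _ _ := rfl

@[simp]
lemma toEuclideanSpace_apply (A : Matrix m n 𝕜) (p : m × n) :
    A.toEuclideanSpace p = A p.1 p.2 :=
  rfl

lemma norm_toEuclideanSpace_sq [Fintype m] [Fintype n] (A : Matrix m n 𝕜) :
    ‖A.toEuclideanSpace‖ ^ 2 = RCLike.re (Aᴴ * A).trace := by
  simp [EuclideanSpace.norm_sq_eq, trace, mul_apply, RCLike.conj_mul, Fintype.sum_prod_type,
    sum_comm (γ := m)]

end Matrix

noncomputable def skewVec {n : Type*} [Fintype n] [DecidableEq n] (R : Matrix n n ℂ) :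
    Matrix n n ℂ →ₗ[ℂ] EuclideanSpace ℂ (n × n) :=
  ((√2)⁻¹ : ℂ) • Matrix.toEuclideanSpace ∘ₗ (LinearMap.mulLeft ℂ R - LinearMap.mulRight ℂ R)

lemma skewInfo_eq_norm_skewVec_sq {d : ℕ} {ρ : Matrix (Fin d) (Fin d) ℂ} (hρ : ρ.PosSemidef)
    (A : Matrix (Fin d) (Fin d) ℂ) : skewInfo hρ A = ‖skewVec hρ.sqrt A‖ ^ 2 := by
  rw [skewVec, LinearMap.smul_apply, norm_smul, mul_pow, LinearMap.comp_apply,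
    Matrix.norm_toEuclideanSpace_sq, skewInfo]
  simp

theorem stmt_6_general {d N : ℕ}
    (ρ : Matrix (Fin d) (Fin d) ℂ) (hρ : ρ.PosSemidef)
    (U : Fin N → Matrix (Fin d) (Fin d) ℂ) :
    ∑ s, skewInfo hρ (U s) ≥
      (1 / (N : ℝ)) *
        (skewInfo hρ (∑ s, U s)
          + (2 / ((N : ℝ) * ((N : ℝ) - 1))) *
            (∑ s : Fin N, ∑ t ∈ Finset.Ioi s,
              Real.sqrt (skewInfo hρ (U s - U t))) ^ 2) := by
  have h := inv_card_mul_norm_sum_sq_add_le fun s => skewVec hρ.sqrt (U s)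
  simp only [Fintype.card_fin, ← map_sum, ← map_sub] at h
  simpa only [skewInfo_eq_norm_skewVec_sq, Real.sqrt_sq (norm_nonneg _)] using h

theorem stmt_6 {d N : ℕ} (hN : 2 ≤ N)
    (ρ : Matrix (Fin d) (Fin d) ℂ) (hρ : ρ.PosSemidef) (htr : ρ.trace = 1)
    (U : Fin N → Matrix (Fin d) (Fin d) ℂ)
    (hU : ∀ s, U s ∈ Matrix.unitaryGroup (Fin d) ℂ) :
    ∑ s, skewInfo hρ (U s) ≥
      (1 / (N : ℝ)) *
        (skewInfo hρ (∑ s, U s)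
          + (2 / ((N : ℝ) * ((N : ℝ) - 1))) *
            (∑ s : Fin N, ∑ t ∈ Finset.Ioi s,
              Real.sqrt (skewInfo hρ (U s - U t))) ^ 2) :=
  stmt_6_general ρ hρ U
end
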